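/- Let f be analytic on the open unit disk 𝔻 with f(0) = 0 and f'(0) = 1. If |z f''(z) + f'(z) − (f'(z))²| < 1/2 for all z ∈ 𝔻, then Re f'(z) > 0 for all z ∈ 𝔻. -/

import Mathlib

/-!
Let `g = f'`, so `g 0 = 1`. If `Re g` is not positive on the disk, take a zero `z₀` of `Re g` of
least modulus: then `Re g ≥ 0` on `|z| ≤ |z₀|`. The Cayley transform `w = (g - 1) / (g + 1)` is
bounded by `1` there, vanishes at `0` and has modulus `1` at `z₀`, so Jack's lemma
(`z₀ w'(z₀) = k w(z₀)` with real `k ≥ 1`, from the Schwarz lemma along the radius and maximality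
along the circle) gives `z₀ g'(z₀) = k (g(z₀)² - 1) / 2`. With `g(z₀) = iy` this makes
`|z₀ g'(z₀) + g(z₀) - g(z₀)²| ≥ 1/2`, contradicting the hypothesis.
-/

open Complex ComplexConjugate Metric Set

theorem hasDerivAt_norm_sq_comp {w : ℂ → ℂ} {c : ℝ → ℂ} {c' : ℂ} {t : ℝ}
    (hw : DifferentiableAt ℂ w (c t)) (hc : HasDerivAt c c' t) :
    HasDerivAt (fun s ↦ ‖w (c s)‖ ^ 2) (2 * (deriv w (c t) * c' * conj (w (c t))).re) t := by
  simpa [Complex.inner] using (hw.hasDerivAt.comp t hc).norm_sq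

theorem norm_le_div_mul_norm_of_isMaxOn {w : ℂ → ℂ} {r : ℝ} {a : ℂ}
    (hw : DifferentiableOn ℂ w (ball 0 r)) (hw0 : w 0 = 0)
    (hmax : IsMaxOn (‖w ·‖) (closedBall 0 r) a) {z : ℂ} (hz : z ∈ closedBall 0 r) :
    ‖w z‖ ≤ ‖w a‖ / r * ‖z‖ := by
  rcases (mem_closedBall_zero_iff.1 hz).lt_or_eq with hlt | heq
  · have hmaps : MapsTo w (ball 0 r) (closedBall (w 0) ‖w a‖) := fun y hy ↦ by
      simpa [hw0] using hmax (ball_subset_closedBall hy)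
    simpa [hw0] using Complex.dist_le_div_mul_dist_of_mapsTo_ball hw hmaps (mem_ball_zero_iff.2 hlt)
  · rcases eq_or_ne r 0 with rfl | hr
    · simp [norm_eq_zero.1 heq, hw0]
    · rw [heq, div_mul_cancel₀ _ hr]
      exact hmax hz

section Jack

variable {w : ℂ → ℂ} {z₀ : ℂ}

theorem im_mul_deriv_mul_conj_eq_zero_of_isMaxOn
    (hw : DifferentiableAt ℂ w z₀) (hmax : IsMaxOn (‖w ·‖) (sphere 0 ‖z₀‖) z₀) :
    (z₀ * deriv w z₀ * conj (w z₀)).im = 0 := by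
  let c : ℝ → ℂ := fun θ ↦ z₀ * exp (θ * I)
  have hc0 : c 0 = z₀ := by simp [c]
  have hc : HasDerivAt c (z₀ * I) 0 := by
    simpa [c] using (((hasDerivAt_id (0 : ℝ)).ofReal_comp.mul_const I).cexp.const_mul z₀)
  have hloc : IsLocalMax (fun θ ↦ ‖w (c θ)‖ ^ 2) 0 := Filter.Eventually.of_forall fun θ ↦ by
    have : c θ ∈ sphere (0 : ℂ) ‖z₀‖ := by simp [c, norm_exp_ofReal_mul_I]
    simpa [hc0] using pow_le_pow_left₀ (norm_nonneg _) (hmax this) 2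
  have := hloc.hasDerivAt_eq_zero (hasDerivAt_norm_sq_comp (hc0 ▸ hw) hc)
  rw [hc0, show deriv w z₀ * (z₀ * I) * conj (w z₀) = z₀ * deriv w z₀ * conj (w z₀) * I by ring,
    mul_I_re] at this
  linarith

theorem sq_norm_le_re_mul_deriv_mul_conj_of_isMaxOn (hw : DifferentiableOn ℂ w (ball 0 ‖z₀‖))
    (hwz₀ : DifferentiableAt ℂ w z₀) (hw0 : w 0 = 0)
    (hmax : IsMaxOn (‖w ·‖) (closedBall 0 ‖z₀‖) z₀) :
    ‖w z₀‖ ^ 2 ≤ (z₀ * deriv w z₀ * conj (w z₀)).re := by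
  let c : ℝ → ℂ := fun t ↦ t * z₀
  have hc1 : c 1 = z₀ := by simp [c]
  have hc : HasDerivAt c z₀ 1 := by
    simpa [c] using (hasDerivAt_id (1 : ℝ)).ofReal_comp.mul_const z₀
  let φ : ℝ → ℝ := fun t ↦ ‖w (c t)‖ ^ 2 - ‖w z₀‖ ^ 2 * t ^ 2
  have hφ : HasDerivAt φ (2 * (z₀ * deriv w z₀ * conj (w z₀)).re - 2 * ‖w z₀‖ ^ 2) 1 := by
    have := (hasDerivAt_norm_sq_comp (hc1 ▸ hwz₀) hc).sub
      ((hasDerivAt_pow 2 (1 : ℝ)).const_mul (‖w z₀‖ ^ 2))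
    rw [hc1] at this
    exact this.congr_deriv (by rw [mul_comm (deriv w z₀) z₀]; norm_num [mul_comm])
  -- Schwarz's lemma: `‖w (t z₀)‖ ≤ t ‖w z₀‖` on the segment `[0, z₀]`.
  have hmaxφ : IsMaxOn φ (Icc 0 1) 1 := fun t ht ↦ by
    have hct : c t ∈ closedBall 0 ‖z₀‖ := by
      simpa [c, abs_of_nonneg ht.1] using mul_le_of_le_one_left (norm_nonneg z₀) ht.2
    have hle : ‖w (c t)‖ ≤ ‖w z₀‖ * t := calc
      ‖w (c t)‖ ≤ ‖w z₀‖ / ‖z₀‖ * ‖c t‖ := norm_le_div_mul_norm_of_isMaxOn hw hw0 hmax hct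
      _ = ‖w z₀‖ * t * (‖z₀‖ / ‖z₀‖) := by
        simp only [Complex.norm_mul, norm_real, Real.norm_eq_abs, abs_of_nonneg ht.1, c]; ring
      _ ≤ ‖w z₀‖ * t := mul_le_of_le_one_right (by positivity [ht.1]) (div_self_le_one _)
    simp only [φ, hc1, mem_ofPred_eq]
    nlinarith [norm_nonneg (w (c t))]
  have hcone : (-1 : ℝ) ∈ posTangentConeAt (Icc 0 1) (1 : ℝ) :=
    mem_posTangentConeAt_of_segment_subset (by simp [segment_symm, segment_eq_Icc])
  have h := hmaxφ.localize.hasFDerivWithinAt_nonpos hφ.hasFDerivAt.hasFDerivWithinAt hcone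
  rw [ContinuousLinearMap.toSpanSingleton_apply, smul_eq_mul] at h
  linarith

theorem jack_lemma (hw : ∀ z ∈ closedBall 0 ‖z₀‖, DifferentiableAt ℂ w z) (hw0 : w 0 = 0)
    (hmax : IsMaxOn (‖w ·‖) (closedBall 0 ‖z₀‖) z₀) (hwz₀ : w z₀ ≠ 0) :
    ∃ k : ℝ, 1 ≤ k ∧ z₀ * deriv w z₀ = k * w z₀ := by
  set A := z₀ * deriv w z₀ * conj (w z₀) with hA
  have hz₀ : z₀ ∈ closedBall 0 ‖z₀‖ := by simp
  have him : A.im = 0 :=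
    im_mul_deriv_mul_conj_eq_zero_of_isMaxOn (hw z₀ hz₀) (hmax.on_subset sphere_subset_closedBall)
  have hre : ‖w z₀‖ ^ 2 ≤ A.re := sq_norm_le_re_mul_deriv_mul_conj_of_isMaxOn
    (fun z hz ↦ (hw z (ball_subset_closedBall hz)).differentiableWithinAt) (hw z₀ hz₀) hw0 hmax
  have hM : 0 < ‖w z₀‖ ^ 2 := by positivity
  refine ⟨A.re / ‖w z₀‖ ^ 2, (one_le_div hM).2 hre, ?_⟩
  have hAreal : (A.re : ℂ) = A := Complex.ext rfl (by simp [him])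
  have hconj : conj (w z₀) * w z₀ = (‖w z₀‖ ^ 2 : ℝ) := by simp [Complex.conj_mul']
  rw [ofReal_div, hAreal, div_mul_eq_mul_div, eq_div_iff (by exact_mod_cast hM.ne'), hA,
    mul_assoc _ _ (w z₀), hconj, mul_assoc]

end Jack

namespace Complex

variable {p : ℂ}

theorem add_one_ne_zero_of_re_nonneg (hp : 0 ≤ p.re) : p + 1 ≠ 0 := fun h ↦ by
  have := congrArg re h
  simp only [add_re, one_re, zero_re] at this
  linarith

theorem sq_norm_add_one_sub_sq_norm_sub_one (p : ℂ) :
    ‖p + 1‖ ^ 2 - ‖p - 1‖ ^ 2 = 4 * p.re := by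
  simp only [Complex.sq_norm, normSq_apply, add_re, sub_re, add_im, sub_im, one_re, one_im]
  ring

theorem norm_sub_one_div_add_one_le_one (hp : 0 ≤ p.re) : ‖(p - 1) / (p + 1)‖ ≤ 1 := by
  rw [norm_div, div_le_one (norm_pos_iff.2 (add_one_ne_zero_of_re_nonneg hp)),
    ← sq_le_sq₀ (norm_nonneg _) (norm_nonneg _)]
  linarith [sq_norm_add_one_sub_sq_norm_sub_one p]

theorem norm_sub_one_div_add_one_of_re_eq_zero (hp : p.re = 0) : ‖(p - 1) / (p + 1)‖ = 1 := by
  rw [norm_div, div_eq_one_iff_eq (norm_ne_zero_iff.2 (add_one_ne_zero_of_re_nonneg hp.ge)),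
    ← sq_eq_sq₀ (norm_nonneg _) (norm_nonneg _)]
  linarith [sq_norm_add_one_sub_sq_norm_sub_one p]

end Complex

theorem jack_lemma_of_re_nonneg {g : ℂ → ℂ} {z₀ : ℂ}
    (hg : ∀ z ∈ closedBall 0 ‖z₀‖, DifferentiableAt ℂ g z) (hg0 : g 0 = 1)
    (hre : ∀ z ∈ closedBall 0 ‖z₀‖, 0 ≤ (g z).re) (hre0 : (g z₀).re = 0) :
    ∃ k : ℝ, 1 ≤ k ∧ z₀ * deriv g z₀ = k * (g z₀ ^ 2 - 1) / 2 := by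
  have hz₀ : z₀ ∈ closedBall 0 ‖z₀‖ := by simp
  have hne z (hz : z ∈ closedBall 0 ‖z₀‖) : g z + 1 ≠ 0 := add_one_ne_zero_of_re_nonneg (hre z hz)
  have hw z (hz : z ∈ closedBall 0 ‖z₀‖) :
      HasDerivAt (fun z ↦ (g z - 1) / (g z + 1)) (2 * deriv g z / (g z + 1) ^ 2) z :=
    have hgz := (hg z hz).hasDerivAt
    ((hgz.sub_const 1).div (hgz.add_const 1) (hne z hz)).congr_deriv (by ring)
  have hw_z₀ := norm_sub_one_div_add_one_of_re_eq_zero hre0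
  obtain ⟨k, hk, hkw⟩ := jack_lemma (fun z hz ↦ (hw z hz).differentiableAt) (by simp [hg0])
    (fun z hz ↦ (norm_sub_one_div_add_one_le_one (hre z hz)).trans hw_z₀.ge)
    (norm_ne_zero_iff.1 (hw_z₀.trans_ne one_ne_zero))
  refine ⟨k, hk, ?_⟩
  rw [(hw z₀ hz₀).deriv] at hkw
  have hne₀ := hne z₀ hz₀
  field_simp at hkw
  linear_combination hkw / 2

theorem ContinuousOn.exists_zero_of_least_norm {E : Type*} [NormedAddCommGroup E]
    [NormedSpace ℝ E] [ProperSpace E] {u : E → ℝ} {R : ℝ} (hu : ContinuousOn u (ball 0 R))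
    (hu0 : 0 < u 0) {z₁ : E} (hz₁ : z₁ ∈ ball 0 R) (hz₁u : u z₁ ≤ 0) :
    ∃ z₀ ∈ ball (0 : E) R, u z₀ = 0 ∧ ∀ z ∈ closedBall 0 ‖z₀‖, 0 ≤ u z := by
  have hz₁R : closedBall (0 : E) ‖z₁‖ ⊆ ball 0 R :=
    closedBall_subset_ball (mem_ball_zero_iff.1 hz₁)
  set K := closedBall (0 : E) ‖z₁‖ ∩ u ⁻¹' Iic 0
  have hK : IsCompact K := (isCompact_closedBall 0 _).of_isClosed_subset
    ((hu.mono hz₁R).preimage_isClosed_of_isClosed isClosed_closedBall isClosed_Iic)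
    inter_subset_left
  obtain ⟨z₀, ⟨hz₀K, hz₀u⟩, hmin⟩ :=
    hK.exists_isMinOn ⟨z₁, by simp, hz₁u⟩ continuous_norm.continuousOn
  have hpos : ∀ z ∈ ball (0 : E) ‖z₀‖, 0 < u z := fun z hz ↦ by
    by_contra! h
    have hzK : z ∈ K := ⟨mem_closedBall_zero_iff.2
      ((mem_ball_zero_iff.1 hz).le.trans (mem_closedBall_zero_iff.1 hz₀K)), h⟩
    exact (hmin hzK).not_gt (mem_ball_zero_iff.1 hz)
  have hz₀ : z₀ ≠ 0 := by rintro rfl; exact hz₀u.not_gt hu0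
  have hz₀R : closedBall (0 : E) ‖z₀‖ ⊆ ball 0 R :=
    (closedBall_subset_closedBall (mem_closedBall_zero_iff.1 hz₀K)).trans hz₁R
  have hnonneg : ∀ z ∈ closedBall (0 : E) ‖z₀‖, 0 ≤ u z := by
    rw [← closure_ball 0 (norm_ne_zero_iff.2 hz₀)] at hz₀R ⊢
    exact le_on_closure (fun z hz ↦ (hpos z hz).le) continuousOn_const (hu.mono hz₀R)
  exact ⟨z₀, hz₁R hz₀K, le_antisymm hz₀u (hnonneg z₀ (by simp)), hnonneg⟩

theorem one_half_le_norm_mul_sq_sub_one_add_sub_sq {k : ℝ} (hk : 1 ≤ k) {p : ℂ} (hp : p.re = 0) :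
    1 / 2 ≤ ‖k * (p ^ 2 - 1) / 2 + p - p ^ 2‖ := by
  obtain ⟨y, rfl⟩ : ∃ y : ℝ, p = y * I := ⟨p.im, Complex.ext (by simp [hp]) (by simp)⟩
  have h : k * ((y * I) ^ 2 - 1) / 2 + y * I - (y * I) ^ 2
      = ((y ^ 2 - k * (1 + y ^ 2) / 2 : ℝ) : ℂ) + y * I := by
    push_cast
    linear_combination (y ^ 2 * (k / 2 - 1) : ℂ) * I_sq
  rw [h, norm_add_mul_I]
  refine Real.le_sqrt_of_sq_le ?_
  -- The real part is at least `(1 - y²) / 2`, so the sum of squares is at least `(1 + y²)² / 4`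
  -- when `y² ≤ 1`.
  have hre : (1 - y ^ 2) / 2 ≤ k * (1 + y ^ 2) / 2 - y ^ 2 := by nlinarith [sq_nonneg y]
  nlinarith [sq_nonneg y]

theorem stmt_8 (f : ℂ → ℂ)
    (hf : AnalyticOnNhd ℂ f (ball (0 : ℂ) 1))
    (hf'0 : deriv f 0 = 1)
    (hineq : ∀ z ∈ ball (0 : ℂ) 1,
      ‖z * deriv (deriv f) z + deriv f z - (deriv f z) ^ 2‖ < 1 / 2) :
    ∀ z ∈ ball (0 : ℂ) 1, 0 < (deriv f z).re := by
  by_contra! ⟨z₁, hz₁, hz₁re⟩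
  have hg := hf.deriv
  obtain ⟨z₀, hz₀, hre0, hre⟩ := ContinuousOn.exists_zero_of_least_norm
    (continuous_re.comp_continuousOn hg.continuousOn) (by simp [hf'0]) hz₁ hz₁re
  have hsub : closedBall (0 : ℂ) ‖z₀‖ ⊆ ball 0 1 := closedBall_subset_ball (mem_ball_zero_iff.1 hz₀)
  obtain ⟨k, hk, hjack⟩ :=
    jack_lemma_of_re_nonneg (fun z hz ↦ (hg z (hsub hz)).differentiableAt) hf'0 hre hre0
  have := hineq z₀ hz₀
  rw [hjack] at this
  exact (one_half_le_norm_mul_sq_sub_one_add_sub_sq hk hre0).not_gt this
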